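/- For every stationary process (X_i)_{i∈ℤ} over a finite alphabet 𝕏 and all positive integers k ≤ n, the conditional block entropy given the shift-invariant σ-algebra dominates the expected plug-in estimate: H(X_1^k|ℐ) ≥ E[H(k, X_1^n)]. -/

import Mathlib

open MeasureTheory Filter Real

variable {𝕏 : Type*} [Fintype 𝕏] [Nonempty 𝕏] [DecidableEq 𝕏]
  [MeasurableSpace 𝕏] [MeasurableSingletonClass 𝕏]

/-- The left shift on two-sided sequences: `(shift ω) i = ω (i + 1)`. -/
def shift (ω : ℤ → 𝕏) : ℤ → 𝕏 := fun i => ω (i + 1)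

/-- The block `X_{s+1}^{s+l}` of a sequence `ω`, as a tuple in `𝕏^l`. -/
def blk (s l : ℕ) (ω : ℤ → 𝕏) : Fin l → 𝕏 := fun i => ω ((s : ℤ) + 1 + (i : ℤ))

/-- Shannon entropy (base 2) of a distribution `p` on a finite set:
`H(p) = -∑_{w : p w > 0} p w * log₂ (p w)` (`logb 2 0 = 0`, so zero-mass
points contribute nothing). -/
noncomputable def Hent {A : Type*} [Fintype A] (p : A → ℝ) : ℝ :=
  -∑ w, p w * Real.logb 2 (p w)

/-- Empirical nonoverlapping-block distribution
`p_k(w, x_1^n) = ⌊n/k⌋⁻¹ ∑_{i=1}^{⌊n/k⌋} 1[x_{(i-1)k+1}^{ik} = w]`. -/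
noncomputable def empDist (k n : ℕ) (ω : ℤ → 𝕏) : (Fin k → 𝕏) → ℝ :=
  fun w => (∑ i ∈ Finset.range (n / k), if blk (i * k) k ω = w then (1 : ℝ) else 0) / (n / k : ℕ)

/-- Plug-in estimator `H(k, x_1^n)` of the block entropy. -/
noncomputable def plugIn (k n : ℕ) (ω : ℤ → 𝕏) : ℝ := Hent (empDist k n ω)

/-- True block distribution `p_k(w) = P(X_1^k = w)`. -/
noncomputable def pblock (μ : Measure (ℤ → 𝕏)) (k : ℕ) : (Fin k → 𝕏) → ℝ :=
  fun w => (μ {ω | blk 0 k ω = w}).toReal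

/-- Block entropy `H(k) = H(p_k)`. -/
noncomputable def Hblock (μ : Measure (ℤ → 𝕏)) (k : ℕ) : ℝ := Hent (pblock μ k)

/-- Number `D(k, x_1^n)` of distinct nonoverlapping `k`-blocks in `x_1^n`. -/
noncomputable def Dcount (k n : ℕ) (ω : ℤ → 𝕏) : ℕ :=
  Set.ncard {w : Fin k → 𝕏 | ∃ i < n / k, blk (i * k) k ω = w}

/-- Length bound `K(k, x_1^n)` of the modified `k`-block code:
`K(k,x_1^n) = 2 log₂ k + (n/k)(H(k,x_1^n) + 2) + 3 k log₂|𝕏| (D(k,x_1^n) + 1)`. -/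
noncomputable def Kcode (k n : ℕ) (ω : ℤ → 𝕏) : ℝ :=
  2 * Real.logb 2 k + ((n : ℝ) / k) * (plugIn k n ω + 2)
    + 3 * k * Real.logb 2 (Fintype.card 𝕏) * (Dcount k n ω + 1)

/-- Conditional probability `P(X_1^k = w | ℐ)` given the shift-invariant
σ-algebra `ℐ`, as a function of the sample point. -/
noncomputable def condP (μ : Measure (ℤ → 𝕏)) (k : ℕ) (w : Fin k → 𝕏) : (ℤ → 𝕏) → ℝ :=
  μ[Set.indicator {ω | blk 0 k ω = w} (fun _ => (1 : ℝ)) | MeasurableSpace.invariants shift]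

/-- Conditional block entropy `H(X_1^k | ℐ) = E[-log₂ P(X_1^k = w | ℐ)|_{w = X_1^k}]`. -/
noncomputable def condH (μ : Measure (ℤ → 𝕏)) (k : ℕ) : ℝ :=
  ∫ ω, -Real.logb 2 (condP μ k (blk 0 k ω) ω) ∂μ

/-- `σ(y) = min(2^y, 1)`. -/
noncomputable def sigmaFn (y : ℝ) : ℝ := min ((2 : ℝ) ^ y) 1

/-- Negative part `x⁻ = -x · 1[x < 0]`. -/
noncomputable def nPart (x : ℝ) : ℝ := if x < 0 then -x else 0
/-!
Write `G_w = P(X_1^k = w | ℐ)`. By Gibbs' inequality, pointwise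
`H(k, X_1^n) ≤ -∑_w p_k(w, X_1^n) log₂ G_w`, and the right-hand side is the average over the
`⌊n/k⌋` blocks `X_{ik+1}^{ik+k}` of `-log₂ G_w` evaluated at `w` = that block. Being
`ℐ`-measurable, each `G_w` is shift invariant, so by stationarity every block term has the same
expectation as the first one, which is `H(X_1^k|ℐ)`.

Two technical points: Gibbs needs `G_w > 0` wherever the block `w` occurs, and the expectations
need `-log₂ G_{X_1^k}` to be integrable. Both follow from `E[1{X_1^k = w} h] = E[G_w h]` for
nonnegative `ℐ`-measurable `h`, together with `x (-log₂ x) ≤ 1 / ln 2`.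
-/


section Entropy

variable {A : Type*} [Fintype A]

theorem mul_neg_logb_le {x : ℝ} (hx : 0 ≤ x) : x * -logb 2 x ≤ (log 2)⁻¹ := by
  have h : x * -logb 2 x = negMulLog x / log 2 := by
    simp only [negMulLog, logb]
    ring
  rw [h, div_eq_mul_inv]
  refine mul_le_of_le_one_left (inv_nonneg.2 (log_nonneg one_le_two)) ?_
  linarith [negMulLog_le_one_sub_self hx]

theorem abs_Hent_le {p : A → ℝ} (hp : ∀ w, p w ∈ Set.Icc 0 1) :
    |Hent p| ≤ Fintype.card A * (log 2)⁻¹ := by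
  have hterm : ∀ w, |p w * -logb 2 (p w)| ≤ (log 2)⁻¹ := fun w => by
    obtain ⟨h0, h1⟩ := hp w
    rw [abs_of_nonneg (mul_nonneg h0 (neg_nonneg.2 (logb_nonpos one_lt_two h0 h1)))]
    exact mul_neg_logb_le h0
  calc |Hent p| = |∑ w, p w * -logb 2 (p w)| := by
        simp only [Hent, mul_neg, Finset.sum_neg_distrib]
    _ ≤ ∑ w, |p w * -logb 2 (p w)| := Finset.abs_sum_le_sum_abs _ _
    _ ≤ ∑ _w : A, (log 2)⁻¹ := Finset.sum_le_sum fun w _ => hterm w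
    _ = Fintype.card A * (log 2)⁻¹ := by simp

theorem mul_logb_sub_mul_logb_le {p q : ℝ} (hp : 0 ≤ p) (hq : 0 ≤ q) (hpq : 0 < p → 0 < q) :
    p * logb 2 q - p * logb 2 p ≤ (q - p) / log 2 := by
  rcases hp.eq_or_lt with rfl | hp
  · simp only [zero_mul, sub_zero]
    positivity
  have hq := hpq hp
  calc p * logb 2 q - p * logb 2 p = p * log (q / p) / log 2 := by
        rw [log_div hq.ne' hp.ne']
        simp only [logb]
        ring
    _ ≤ p * (q / p - 1) / log 2 := by
        gcongr
        exact log_le_sub_one_of_pos (div_pos hq hp)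
    _ = (q - p) / log 2 := by field_simp

theorem Hent_le_neg_sum_mul_logb {p q : A → ℝ} (hp : ∀ w, 0 ≤ p w) (hq : ∀ w, 0 ≤ q w)
    (hsum : ∑ w, q w ≤ ∑ w, p w) (hpq : ∀ w, 0 < p w → 0 < q w) :
    Hent p ≤ -∑ w, p w * logb 2 (q w) := by
  have h : ∑ w, (p w * logb 2 (q w) - p w * logb 2 (p w)) ≤ 0 :=
    calc ∑ w, (p w * logb 2 (q w) - p w * logb 2 (p w))
        ≤ ∑ w, (q w - p w) / log 2 :=
          Finset.sum_le_sum fun w _ => mul_logb_sub_mul_logb_le (hp w) (hq w) (hpq w)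
      _ = (∑ w, q w - ∑ w, p w) / log 2 := by rw [← Finset.sum_div, Finset.sum_sub_distrib]
      _ ≤ 0 := div_nonpos_of_nonpos_of_nonneg (by linarith) (log_nonneg one_le_two)
  rw [Finset.sum_sub_distrib] at h
  rw [Hent]
  linarith

end Entropy

section CondExp

variable {α : Type*} {m m0 : MeasurableSpace α} {μ : Measure α}

theorem lintegral_ofReal_mul_condExp (hm : m ≤ m0) [SigmaFinite (μ.trim hm)] {f : α → ℝ}
    (hf : Integrable f μ) (hf0 : 0 ≤ᵐ[μ] f) {g : α → ENNReal} (hg : Measurable[m] g) :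
    ∫⁻ x, ENNReal.ofReal (f x) * g x ∂μ = ∫⁻ x, ENNReal.ofReal (μ[f|m] x) * g x ∂μ := by
  have htrim : (μ.withDensity fun x => ENNReal.ofReal (f x)).trim hm
      = (μ.withDensity fun x => ENNReal.ofReal (μ[f|m] x)).trim hm := by
    refine @Measure.ext _ m _ _ fun s hs => ?_
    rw [trim_measurableSet_eq hm hs, trim_measurableSet_eq hm hs,
      withDensity_apply _ (hm s hs), withDensity_apply _ (hm s hs),
      ← ofReal_integral_eq_lintegral_ofReal hf.restrict (ae_restrict_of_ae hf0),
      ← ofReal_integral_eq_lintegral_ofReal integrable_condExp.restrict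
        (ae_restrict_of_ae (condExp_nonneg hf0)), setIntegral_condExp hm hf hs]
  have hg' : AEMeasurable g μ := (hg.mono hm le_rfl).aemeasurable
  calc ∫⁻ x, ENNReal.ofReal (f x) * g x ∂μ
      = ∫⁻ x, g x ∂(μ.withDensity fun x => ENNReal.ofReal (f x)) :=
        (lintegral_withDensity_eq_lintegral_mul₀ hf.1.aemeasurable.ennreal_ofReal hg').symm
    _ = ∫⁻ x, g x ∂(μ.withDensity fun x => ENNReal.ofReal (μ[f|m] x)) := by
        rw [← lintegral_trim hm hg, htrim, lintegral_trim hm hg]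
    _ = ∫⁻ x, ENNReal.ofReal (μ[f|m] x) * g x ∂μ :=
        lintegral_withDensity_eq_lintegral_mul₀
          integrable_condExp.1.aemeasurable.ennreal_ofReal hg'

theorem ae_eq_zero_of_condExp_nonpos (hm : m ≤ m0) [SigmaFinite (μ.trim hm)] {f : α → ℝ}
    (hf : Integrable f μ) (hf0 : 0 ≤ᵐ[μ] f) : ∀ᵐ x ∂μ, μ[f|m] x ≤ 0 → f x = 0 := by
  set S := {x | μ[f|m] x ≤ 0}
  have hS : MeasurableSet[m] S :=
    (stronglyMeasurable_condExp (m := m) (μ := μ) (f := f)).measurable measurableSet_Iic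
  have hind : Measurable[m] (S.indicator fun _ => (1 : ENNReal)) :=
    measurable_const.indicator hS
  have hzero : ∫⁻ x, ENNReal.ofReal (f x) * S.indicator (fun _ => 1) x ∂μ = 0 := by
    rw [lintegral_ofReal_mul_condExp hm hf hf0 hind]
    refine (lintegral_congr fun x => ?_).trans lintegral_zero
    by_cases hx : x ∈ S
    · simp [ENNReal.ofReal_eq_zero.2 hx]
    · simp [hx]
  have hae := (lintegral_eq_zero_iff' (hf.1.aemeasurable.ennreal_ofReal.mul
    (hind.mono hm le_rfl).aemeasurable)).1 hzero
  filter_upwards [hae, hf0] with x hx hx0 hxS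
  rw [Pi.mul_apply, Set.indicator_of_mem (show x ∈ S from hxS), mul_one, Pi.zero_apply,
    ENNReal.ofReal_eq_zero] at hx
  exact le_antisymm hx hx0

theorem integrable_mul_of_condExp_mul_le (hm : m ≤ m0) [IsFiniteMeasure μ] {f g : α → ℝ}
    (hf : Integrable f μ) (hf0 : 0 ≤ᵐ[μ] f) (hg : StronglyMeasurable[m] g) {C : ℝ}
    (hC : ∀ᵐ x ∂μ, μ[f|m] x * ‖g x‖ ≤ C) : Integrable (fun x => f x * g x) μ := by
  refine ⟨hf.1.mul (hg.mono hm).aestronglyMeasurable, ?_⟩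
  calc ∫⁻ x, ‖f x * g x‖ₑ ∂μ = ∫⁻ x, ENNReal.ofReal (f x) * ‖g x‖ₑ ∂μ := by
        refine lintegral_congr_ae ?_
        filter_upwards [hf0] with x hx
        rw [enorm_mul, Real.enorm_of_nonneg hx]
    _ = ∫⁻ x, ENNReal.ofReal (μ[f|m] x) * ‖g x‖ₑ ∂μ :=
        lintegral_ofReal_mul_condExp hm hf hf0 hg.enorm
    _ ≤ ∫⁻ _, ENNReal.ofReal C ∂μ := by
        refine lintegral_mono_ae ?_
        filter_upwards [hC, condExp_nonneg hf0] with x hx hx0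
        rw [← ofReal_norm, ← ENNReal.ofReal_mul hx0]
        exact ENNReal.ofReal_le_ofReal hx
    _ < ⊤ := by simp [ENNReal.mul_lt_top, measure_lt_top]

end CondExp

section StationaryProcess

open MeasurableSpace

variable {α : Type*}

theorem shift_iterate_apply (s : ℕ) (ω : ℤ → α) (i : ℤ) : shift^[s] ω i = ω (i + s) := by
  induction s generalizing ω with
  | zero => simp
  | succ s ih =>
    rw [Function.iterate_succ_apply, ih]
    simp only [shift]
    congr 1
    push_cast
    ring

theorem blk_eq_blk_zero_shift_iterate (s k : ℕ) (ω : ℤ → α) :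
    blk s k ω = blk 0 k (shift^[s] ω) := by
  funext i
  simp only [blk, shift_iterate_apply]
  congr 1
  push_cast
  ring

theorem sum_indicator_blk_mul [Fintype α] {k : ℕ} (f : (Fin k → α) → ℝ) (ω : ℤ → α) :
    ∑ w, {ω | blk 0 k ω = w}.indicator (fun _ => (1 : ℝ)) ω * f w = f (blk 0 k ω) := by
  rw [Finset.sum_eq_single (blk 0 k ω) (fun w _ hw => by simp [Ne.symm hw]) (by simp)]
  simp

variable [MeasurableSpace α]

theorem measurable_blk (s k : ℕ) : Measurable (blk (𝕏 := α) s k) :=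
  measurable_pi_lambda _ fun _ => measurable_pi_apply _

/-- `-log₂ P(X_1^k = w | ℐ)`, so that `condH μ k` is its expectation at `w = X_1^k`. -/
noncomputable def condInfo (μ : Measure (ℤ → α)) (k : ℕ) (w : Fin k → α) (ω : ℤ → α) : ℝ :=
  -logb 2 (condP μ k w ω)

variable (μ : Measure (ℤ → α)) (k : ℕ)

theorem stronglyMeasurable_condP (w : Fin k → α) :
    StronglyMeasurable[invariants shift] (condP μ k w) :=
  stronglyMeasurable_condExp

theorem stronglyMeasurable_condInfo (w : Fin k → α) :
    StronglyMeasurable[invariants shift] (condInfo μ k w) :=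
  ((measurable_log.comp (stronglyMeasurable_condP μ k w).measurable).div_const _).neg
    |>.stronglyMeasurable

theorem condP_blk_eq_comp_shift_iterate (s : ℕ) (ω : ℤ → α) :
    condP μ k (blk s k ω) ω = condP μ k (blk 0 k (shift^[s] ω)) (shift^[s] ω) := by
  have hinv : condP μ k _ ∘ shift^[s] = condP μ k _ := comp_eq_of_measurable_invariants
    ((stronglyMeasurable_condP μ k (blk s k ω)).measurable.mono
      (le_invariants_iterate shift s) le_rfl)
  rw [← congrFun hinv ω, Function.comp_apply, ← blk_eq_blk_zero_shift_iterate]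

theorem condInfo_blk_eq_comp_shift_iterate (s : ℕ) :
    (fun ω => condInfo μ k (blk s k ω) ω)
      = (fun ω => condInfo μ k (blk 0 k ω) ω) ∘ shift^[s] := by
  funext ω
  simp only [condInfo, Function.comp_apply]
  rw [condP_blk_eq_comp_shift_iterate]

theorem condP_nonneg (w : Fin k → α) : 0 ≤ᵐ[μ] condP μ k w :=
  condExp_nonneg (Eventually.of_forall fun _ => Set.indicator_nonneg (fun _ _ => zero_le_one) _)

variable [MeasurableSingletonClass α] [IsFiniteMeasure μ]

theorem integrable_indicator_blk (w : Fin k → α) :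
    Integrable ({ω | blk 0 k ω = w}.indicator fun _ => (1 : ℝ)) μ :=
  (integrable_const 1).indicator (measurable_blk 0 k (measurableSet_singleton w))

theorem condP_le_one (w : Fin k → α) : ∀ᵐ ω ∂μ, condP μ k w ω ≤ 1 := by
  have h := condExp_mono (m := invariants shift) (integrable_indicator_blk μ k w)
    (integrable_const (1 : ℝ))
    (Eventually.of_forall (Set.indicator_le_self' fun _ _ => zero_le_one))
  rwa [condExp_const (invariants_le shift)] at h

variable [Fintype α]

theorem sum_condP : ∀ᵐ ω ∂μ, ∑ w, condP μ k w ω = 1 := by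
  have h := condExp_finsetSum (s := Finset.univ)
    (fun w _ => integrable_indicator_blk μ k w) (invariants shift)
  have hone : ∑ w : Fin k → α, {ω | blk 0 k ω = w}.indicator (fun _ => (1 : ℝ))
      = fun _ => 1 := by
    funext ω
    simpa [Finset.sum_apply] using sum_indicator_blk_mul (fun _ => (1 : ℝ)) ω
  rw [hone, condExp_const (invariants_le shift)] at h
  filter_upwards [h] with ω hω
  rw [hω, Finset.sum_apply]
  rfl

theorem ae_condP_blk_zero_pos : ∀ᵐ ω ∂μ, 0 < condP μ k (blk 0 k ω) ω := by
  have h : ∀ᵐ ω ∂μ, ∀ w, condP μ k w ω ≤ 0 →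
      {ω | blk 0 k ω = w}.indicator (fun _ => (1 : ℝ)) ω = 0 :=
    ae_all_iff.2 fun w => ae_eq_zero_of_condExp_nonpos (invariants_le shift)
      (integrable_indicator_blk μ k w)
      (Eventually.of_forall fun _ => Set.indicator_nonneg (fun _ _ => zero_le_one) _)
  filter_upwards [h] with ω hω
  by_contra hneg
  simpa using hω _ (not_lt.1 hneg)

theorem integrable_condInfo_blk_zero : Integrable (fun ω => condInfo μ k (blk 0 k ω) ω) μ := by
  have hsum : (fun ω => condInfo μ k (blk 0 k ω) ω) = fun ω =>
      ∑ w, {ω | blk 0 k ω = w}.indicator (fun _ => (1 : ℝ)) ω * condInfo μ k w ω :=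
    funext fun ω => (sum_indicator_blk_mul (condInfo μ k · ω) ω).symm
  rw [hsum]
  refine integrable_finsetSum _ fun w _ => integrable_mul_of_condExp_mul_le
    (invariants_le shift) (integrable_indicator_blk μ k w)
    (Eventually.of_forall fun _ => Set.indicator_nonneg (fun _ _ => zero_le_one) _)
    (stronglyMeasurable_condInfo μ k w) (C := (log 2)⁻¹) ?_
  filter_upwards [condP_nonneg μ k w, condP_le_one μ k w] with ω h0 h1
  change condP μ k w ω * ‖-logb 2 (condP μ k w ω)‖ ≤ _
  rw [Real.norm_of_nonneg (neg_nonneg.2 (logb_nonpos one_lt_two h0 h1))]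
  exact mul_neg_logb_le h0

variable {μ} (hstat : MeasurePreserving shift μ μ)
include hstat

theorem ae_condP_blk_pos (s : ℕ) : ∀ᵐ ω ∂μ, 0 < condP μ k (blk s k ω) ω := by
  filter_upwards [(hstat.iterate s).quasiMeasurePreserving.ae (ae_condP_blk_zero_pos μ k)]
    with ω h
  rwa [condP_blk_eq_comp_shift_iterate]

theorem integrable_condInfo_blk (s : ℕ) :
    Integrable (fun ω => condInfo μ k (blk s k ω) ω) μ := by
  rw [condInfo_blk_eq_comp_shift_iterate]
  exact (hstat.iterate s).integrable_comp_of_integrable (integrable_condInfo_blk_zero μ k)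

theorem integral_condInfo_blk (s : ℕ) :
    ∫ ω, condInfo μ k (blk s k ω) ω ∂μ = condH μ k := by
  have hT := hstat.iterate s
  rw [condInfo_blk_eq_comp_shift_iterate, Function.comp_def,
    ← integral_map (f := fun ω => condInfo μ k (blk 0 k ω) ω) hT.measurable.aemeasurable
      (by rw [hT.map_eq]; exact (integrable_condInfo_blk_zero μ k).1), hT.map_eq]
  rfl

end StationaryProcess

section PlugIn

variable {α : Type*} [DecidableEq α] (k n : ℕ) (ω : ℤ → α)

theorem sum_empDist_mul [Fintype α] (f : (Fin k → α) → ℝ) :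
    ∑ w, empDist k n ω w * f w
      = (∑ i ∈ Finset.range (n / k), f (blk (i * k) k ω)) / (n / k : ℕ) := by
  simp only [empDist, div_mul_eq_mul_div, Finset.sum_mul, ite_mul, one_mul, zero_mul,
    ← Finset.sum_div]
  rw [Finset.sum_comm]
  simp

theorem empDist_nonneg (w : Fin k → α) : 0 ≤ empDist k n ω w :=
  div_nonneg (Finset.sum_nonneg fun _ _ => by split_ifs <;> norm_num) (Nat.cast_nonneg _)

theorem empDist_le_one (w : Fin k → α) : empDist k n ω w ≤ 1 := by
  refine div_le_one_of_le₀ ?_ (Nat.cast_nonneg _)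
  calc ∑ i ∈ Finset.range (n / k), (if blk (i * k) k ω = w then (1 : ℝ) else 0)
      ≤ ∑ _i ∈ Finset.range (n / k), (1 : ℝ) :=
        Finset.sum_le_sum fun _ _ => by split_ifs <;> norm_num
    _ = (n / k : ℕ) := by simp

theorem sum_empDist [Fintype α] {k n : ℕ} (hm : 0 < n / k) (ω : ℤ → α) :
    ∑ w, empDist k n ω w = 1 := by
  have h := sum_empDist_mul k n ω fun _ => 1
  simp only [mul_one, Finset.sum_const, Finset.card_range, nsmul_eq_mul] at h
  rw [h, div_self (by exact_mod_cast hm.ne')]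

variable [MeasurableSpace α] [MeasurableSingletonClass α]

theorem measurable_empDist (w : Fin k → α) : Measurable fun ω => empDist k n ω w :=
  (Finset.measurable_sum _ fun i _ => measurable_const.ite
    (measurable_blk (i * k) k (measurableSet_singleton w)) measurable_const).div_const _

theorem integrable_plugIn [Fintype α] (μ : Measure (ℤ → α)) [IsFiniteMeasure μ] :
    Integrable (plugIn k n) μ := by
  have hmeas : Measurable (plugIn (𝕏 := α) k n) :=
    (Finset.measurable_sum _ fun w _ => (measurable_empDist k n w).mul
      ((measurable_log.comp (measurable_empDist k n w)).div_const _)).neg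
  refine Integrable.of_bound hmeas.aestronglyMeasurable (Fintype.card (Fin k → α) * (log 2)⁻¹)
    (Eventually.of_forall fun ω => ?_)
  rw [Real.norm_eq_abs]
  exact abs_Hent_le fun w => ⟨empDist_nonneg k n ω w, empDist_le_one k n ω w⟩

theorem ae_plugIn_le_avg_condInfo [Fintype α] {μ : Measure (ℤ → α)} [IsFiniteMeasure μ]
    (hstat : MeasurePreserving shift μ μ) {k n : ℕ} (hm : 0 < n / k) :
    ∀ᵐ ω ∂μ, plugIn k n ω
      ≤ (∑ i ∈ Finset.range (n / k), condInfo μ k (blk (i * k) k ω) ω) / (n / k : ℕ) := by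
  have hpos : ∀ᵐ ω ∂μ, ∀ i : ℕ, 0 < condP μ k (blk (i * k) k ω) ω :=
    ae_all_iff.2 fun i => ae_condP_blk_pos k hstat (i * k)
  filter_upwards [hpos, sum_condP μ k, ae_all_iff.2 (condP_nonneg μ k)] with ω hpos hsum h0
  have hsupp : ∀ w, 0 < empDist k n ω w → 0 < condP μ k w ω := fun w hw => by
    obtain ⟨i, -, rfl⟩ : ∃ i ∈ Finset.range (n / k), blk (i * k) k ω = w := by
      by_contra! h
      simp only [empDist] at hw
      rw [Finset.sum_eq_zero fun i hi => if_neg (h i hi), zero_div] at hw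
      exact hw.false
    exact hpos i
  refine (Hent_le_neg_sum_mul_logb (empDist_nonneg k n ω) h0
    (by rw [hsum, sum_empDist hm]) hsupp).trans_eq ?_
  rw [← sum_empDist_mul k n ω (condInfo μ k · ω)]
  simp [condInfo]

end PlugIn

/-- For a stationary process over a finite alphabet and positive integers
`k ≤ n`, the conditional block entropy given the shift-invariant σ-algebra
dominates the expected plug-in estimate: `H(X_1^k|ℐ) ≥ E[H(k, X_1^n)]`. -/
theorem expected_plugIn_le_condH
    {μ : Measure (ℤ → 𝕏)} [IsProbabilityMeasure μ]
    (hstat : MeasurePreserving shift μ μ)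
    (k n : ℕ) (hk : 0 < k) (hkn : k ≤ n) :
    ∫ ω, plugIn k n ω ∂μ ≤ condH μ k := by
  have hm : 0 < n / k := Nat.div_pos hkn hk
  have hint : ∀ i, Integrable (fun ω => condInfo μ k (blk (i * k) k ω) ω) μ :=
    fun i => integrable_condInfo_blk k hstat (i * k)
  calc ∫ ω, plugIn k n ω ∂μ
      ≤ ∫ ω, (∑ i ∈ Finset.range (n / k), condInfo μ k (blk (i * k) k ω) ω) / (n / k : ℕ) ∂μ :=
        integral_mono_ae (integrable_plugIn k n μ)
          ((integrable_finsetSum _ fun i _ => hint i).div_const _)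
          (ae_plugIn_le_avg_condInfo hstat hm)
    _ = (∑ _i ∈ Finset.range (n / k), condH μ k) / (n / k : ℕ) := by
        rw [integral_div, integral_finsetSum _ fun i _ => hint i]
        simp only [integral_condInfo_blk k hstat]
    _ = condH μ k := by
        rw [Finset.sum_const, Finset.card_range, nsmul_eq_mul]
        field_simp
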